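/- Let 0 < q < 1, let t > 0 be a real number, and let k, r, ν be natural numbers with 1 ≤ k < r ≤ ν. Define f(y, z) = q^{-r(ν-r) - k(r-k)} · ([ν]_q!/([k−1]_q![r−k−1]_q![ν−r]_q!)) · (y^{k-1}/t^r) · z^{r-k-1} · ∏_{i=1}^{r-k-1} (1 − y/(q^{i} z)) · ∏_{m=1}^{ν-r} (1 − z/(q^{m-1} t)). Then the iterated Jackson q-integral ∫_0^t ( ∫_0^{q^{r-k} z} f(y, z) d_q y ) d_q z equals 1. -/

import Mathlib

/-!
Both `q`-integrals are `q`-Beta integrals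
`∫_0^{q^s c} x^a ∏_{i<s} (1 - x/(q^i c)) d_q x = (q^s c)^{a+1} [a]_q! [s]_q! / [a+s+1]_q!`.
At the node `x = q^s c q^n` the product is `(q^{n+1}; q)_s`, and the identity follows by induction
on `s` from `(q^{n+1}; q)_{s+1} = (q^{n+1}; q)_s - q^{s+1} q^n (q^{n+1}; q)_s`.
The inner integral is of this shape with `c = q z`, `s = r-k-1`, `a = k-1`. The outer integrand is
`z^{r-1} ∏_{m<ν-r} (1 - z/(q^m t))` up to a constant; it vanishes at the nodes `t, tq, …, tq^{ν-r-1}`,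
so the integral over `[0, t]` equals the one over `[0, q^{ν-r} t]`, again a `q`-Beta integral.
The product of the two Beta values is exactly the inverse of the normalising constant.
-/

/-- The `q`-number `[m]_q = (1 - q^m)/(1 - q)`. -/
noncomputable def qnum (q : ℝ) (m : ℕ) : ℝ := (1 - q ^ m) / (1 - q)

/-- The `q`-factorial `[n]_q! = [1]_q [2]_q ⋯ [n]_q`. -/
noncomputable def qfact (q : ℝ) (n : ℕ) : ℝ := ∏ i ∈ Finset.range n, qnum q (i + 1)

open Finset

/-- `(q^{n+1}; q)_s`. -/
noncomputable def qPochhammer (q : ℝ) (n s : ℕ) : ℝ := ∏ j ∈ range s, (1 - q ^ (n + j + 1))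

noncomputable def jacksonIntegral (q b : ℝ) (g : ℝ → ℝ) : ℝ :=
  (1 - q) * b * ∑' n : ℕ, q ^ n * g (b * q ^ n)

section qCalculus

variable {q : ℝ}

lemma one_sub_pow_pos (hq0 : 0 ≤ q) (hq1 : q < 1) {m : ℕ} (hm : m ≠ 0) : 0 < 1 - q ^ m :=
  sub_pos.2 (pow_lt_one₀ hq0 hq1 hm)

lemma qnum_pos (hq0 : 0 ≤ q) (hq1 : q < 1) {m : ℕ} (hm : m ≠ 0) : 0 < qnum q m :=
  div_pos (one_sub_pow_pos hq0 hq1 hm) (by linarith)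

lemma qfact_pos (hq0 : 0 ≤ q) (hq1 : q < 1) (n : ℕ) : 0 < qfact q n :=
  prod_pos fun i _ ↦ qnum_pos hq0 hq1 i.succ_ne_zero

lemma qfact_succ (n : ℕ) : qfact q (n + 1) = qfact q n * qnum q (n + 1) :=
  prod_range_succ _ _

lemma qnum_add (hq1 : q ≠ 1) (m n : ℕ) : qnum q (m + n) = qnum q m + q ^ m * qnum q n := by
  have : 1 - q ≠ 0 := sub_ne_zero.2 hq1.symm
  simp only [qnum]
  field_simp
  ring

lemma qPochhammer_succ (n s : ℕ) :
    qPochhammer q n (s + 1) = qPochhammer q n s * (1 - q ^ (n + s + 1)) :=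
  prod_range_succ _ _

lemma qPochhammer_nonneg (hq0 : 0 ≤ q) (hq1 : q < 1) (n s : ℕ) : 0 ≤ qPochhammer q n s :=
  prod_nonneg fun _ _ ↦ (one_sub_pow_pos hq0 hq1 (Nat.succ_ne_zero _)).le

lemma qPochhammer_le_one (hq0 : 0 ≤ q) (hq1 : q < 1) (n s : ℕ) : qPochhammer q n s ≤ 1 :=
  prod_le_one (fun _ _ ↦ (one_sub_pow_pos hq0 hq1 (Nat.succ_ne_zero _)).le)
    fun _ _ ↦ sub_le_self _ (pow_nonneg hq0 _)

lemma prod_one_sub_div_eq_qPochhammer (hq : q ≠ 0) (n s : ℕ) :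
    ∏ i ∈ range s, (1 - q ^ (n + s) / q ^ i) = qPochhammer q n s := by
  rw [qPochhammer, ← prod_range_reflect]
  refine prod_congr rfl fun i hi ↦ ?_
  rw [show n + s = n + i + 1 + (s - 1 - i) by grind, pow_add,
    mul_div_cancel_right₀ _ (pow_ne_zero _ hq)]

lemma summable_pow_mul_qPochhammer (hq0 : 0 ≤ q) (hq1 : q < 1) (a s : ℕ) :
    Summable fun n : ℕ ↦ q ^ (n * (a + 1)) * qPochhammer q n s := by
  refine .of_nonneg_of_le (fun n ↦ mul_nonneg (pow_nonneg hq0 _) (qPochhammer_nonneg hq0 hq1 _ _))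
    (fun n ↦ ?_) (summable_geometric_of_lt_one (pow_nonneg hq0 _)
      (pow_lt_one₀ hq0 hq1 a.succ_ne_zero))
  rw [mul_comm n, pow_mul]
  exact mul_le_of_le_one_right (pow_nonneg (pow_nonneg hq0 _) _) (qPochhammer_le_one hq0 hq1 _ _)

/-- The `q`-Beta integral `∫_0^1 x^a (qx; q)_s d_q x = [a]_q! [s]_q! / [a+s+1]_q!` as a series. -/
theorem qBeta_tsum (hq0 : 0 ≤ q) (hq1 : q < 1) (s a : ℕ) :
    (1 - q) * ∑' n : ℕ, q ^ (n * (a + 1)) * qPochhammer q n s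
      = qfact q a * qfact q s / qfact q (a + s + 1) := by
  have hqnum {m : ℕ} (hm : m ≠ 0) := (qnum_pos hq0 hq1 hm).ne'
  have hqfact (m : ℕ) := (qfact_pos hq0 hq1 m).ne'
  induction s generalizing a with
  | zero =>
    simp only [qPochhammer, prod_range_zero, mul_one, mul_comm _ (a + 1), pow_mul]
    rw [tsum_geometric_of_lt_one (pow_nonneg hq0 _) (pow_lt_one₀ hq0 hq1 a.succ_ne_zero),
      add_zero, qfact_succ, show qfact q 0 = 1 from prod_range_zero _, qnum]
    have := (one_sub_pow_pos hq0 hq1 a.succ_ne_zero).ne'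
    have : 1 - q ≠ 0 := by linarith
    field_simp
    exact (div_self (hqfact a)).symm
  | succ s ih =>
    have hsplit (n : ℕ) : q ^ (n * (a + 1)) * qPochhammer q n (s + 1)
        = q ^ (n * (a + 1)) * qPochhammer q n s
          - q ^ (s + 1) * (q ^ (n * (a + 1 + 1)) * qPochhammer q n s) := by
      rw [qPochhammer_succ]
      ring
    have hadd : qnum q (a + s + 1 + 1) = qnum q (s + 1) + q ^ (s + 1) * qnum q (a + 1) := by
      rw [← qnum_add hq1.ne]
      ring_nf
    rw [tsum_congr hsplit, (summable_pow_mul_qPochhammer hq0 hq1 a s).tsum_sub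
      ((summable_pow_mul_qPochhammer hq0 hq1 (a + 1) s).mul_left _), tsum_mul_left, mul_sub,
      mul_left_comm, ih, ih, show a + 1 + s + 1 = a + s + 1 + 1 by ring,
      show a + (s + 1) + 1 = a + s + 1 + 1 by ring, qfact_succ a, qfact_succ s,
      qfact_succ (a + s + 1), hadd]
    have := hadd ▸ hqnum (a + s + 1).succ_ne_zero
    field_simp
    ring

lemma jacksonIntegral_const_mul (q b c : ℝ) (g : ℝ → ℝ) :
    jacksonIntegral q b (fun x ↦ c * g x) = c * jacksonIntegral q b g := by
  simp only [jacksonIntegral, mul_left_comm _ c, tsum_mul_left]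

lemma jacksonIntegral_eq_of_eq_zero {b : ℝ} {g : ℝ → ℝ} {s : ℕ}
    (hg : ∀ j < s, g (b * q ^ j) = 0) :
    jacksonIntegral q b g = jacksonIntegral q (q ^ s * b) g := by
  have hshift : ∑' n : ℕ, q ^ (n + s) * g (b * q ^ (n + s)) = ∑' n : ℕ, q ^ n * g (b * q ^ n) :=
    (add_left_injective s).tsum_eq (f := fun n ↦ q ^ n * g (b * q ^ n)) fun n hn ↦
      ⟨n - s, Nat.sub_add_cancel <| not_lt.1 fun h ↦ hn <| by simp [hg n h]⟩
  simp only [jacksonIntegral, ← hshift, ← tsum_mul_left, pow_add]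
  congr 1 with n
  ring_nf

theorem jacksonIntegral_qBeta (hq0 : 0 < q) (hq1 : q < 1) (a s : ℕ) (c : ℝ) :
    jacksonIntegral q (q ^ s * c) (fun x ↦ x ^ a * ∏ i ∈ range s, (1 - x / (q ^ i * c)))
      = (q ^ s * c) ^ (a + 1) * (qfact q a * qfact q s / qfact q (a + s + 1)) := by
  rcases eq_or_ne c 0 with rfl | hc
  · simp [jacksonIntegral]
  have hnode (n : ℕ) : q ^ n * ((q ^ s * c * q ^ n) ^ a
      * ∏ i ∈ range s, (1 - q ^ s * c * q ^ n / (q ^ i * c)))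
        = (q ^ s * c) ^ a * (q ^ (n * (a + 1)) * qPochhammer q n s) := by
    have hfactor (i : ℕ) : q ^ s * c * q ^ n / (q ^ i * c) = q ^ (n + s) / q ^ i := by
      rw [pow_add]; field_simp
    simp only [hfactor, prod_one_sub_div_eq_qPochhammer hq0.ne']
    ring
  rw [jacksonIntegral, tsum_congr hnode, tsum_mul_left, ← qBeta_tsum hq0.le hq1]
  ring

theorem jacksonIntegral_qBeta' (hq0 : 0 < q) (hq1 : q < 1) (a s : ℕ) (t : ℝ) :
    jacksonIntegral q t (fun z ↦ z ^ a * ∏ m ∈ range s, (1 - z / (q ^ m * t)))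
      = (q ^ s * t) ^ (a + 1) * (qfact q a * qfact q s / qfact q (a + s + 1)) := by
  rcases eq_or_ne t 0 with rfl | ht
  · simp [jacksonIntegral]
  rw [jacksonIntegral_eq_of_eq_zero (s := s), jacksonIntegral_qBeta hq0 hq1]
  intro j hj
  rw [prod_eq_zero (mem_range.2 hj), mul_zero]
  field_simp
  ring

end qCalculus

/-- The iterated Jackson `q`-integral `∫_0^t (∫_0^{q^{r-k} z} f(y,z) d_q y) d_q z` of the
joint `q`-density of the `k`-th and `r`-th `q`-order statistics (a `q`-Dirichlet density)
equals `1`. -/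
theorem stmt17 (q t : ℝ) (hq0 : 0 < q) (hq1 : q < 1) (ht : 0 < t) (k r ν : ℕ)
    (hk : 1 ≤ k) (hkr : k < r) (hrν : r ≤ ν)
    (f : ℝ → ℝ → ℝ)
    (hf : ∀ y z : ℝ, f y z
      = q ^ (-((r : ℤ) * ((ν : ℤ) - (r : ℤ))) - (k : ℤ) * ((r : ℤ) - (k : ℤ)))
          * (qfact q ν / (qfact q (k - 1) * qfact q (r - k - 1) * qfact q (ν - r)))
          * (y ^ (k - 1) / t ^ r) * z ^ (r - k - 1)
          * (∏ i ∈ Finset.range (r - k - 1), (1 - y / (q ^ (i + 1) * z)))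
          * (∏ m ∈ Finset.range (ν - r), (1 - z / (q ^ m * t)))) :
    (1 - q) * t * ∑' m : ℕ, q ^ m *
        ((1 - q) * (q ^ (r - k) * (q ^ m * t)) *
          ∑' n : ℕ, q ^ n * f (q ^ (r - k) * (q ^ m * t) * q ^ n) (q ^ m * t))
      = 1 := by
  obtain ⟨a, rfl⟩ : ∃ a, k = a + 1 := ⟨k - 1, by omega⟩
  obtain ⟨s₁, rfl⟩ : ∃ s, r = a + 1 + (s + 1) := ⟨r - (a + 1) - 1, by omega⟩
  obtain ⟨s₂, rfl⟩ : ∃ s, ν = a + 1 + (s₁ + 1) + s := ⟨ν - (a + 1 + (s₁ + 1)), by omega⟩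
  simp only [Nat.add_sub_cancel_left, Nat.add_sub_cancel] at hf ⊢
  set c := (q ^ ((a + s₁ + 2) * s₂ + (a + 1) * (s₁ + 1)))⁻¹
    * (qfact q (a + 1 + (s₁ + 1) + s₂) / (qfact q a * qfact q s₁ * qfact q s₂))
    / t ^ (a + 1 + (s₁ + 1)) with hc
  have hf' (y z : ℝ) : f y z = (c * z ^ s₁ * ∏ m ∈ range s₂, (1 - z / (q ^ m * t)))
      * (y ^ a * ∏ i ∈ range s₁, (1 - y / (q ^ i * (q * z)))) := by
    have hexp : -(((a + 1 + (s₁ + 1) : ℕ) : ℤ)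
          * ((a + 1 + (s₁ + 1) + s₂ : ℕ) - (a + 1 + (s₁ + 1) : ℕ)))
        - ((a + 1 : ℕ) : ℤ) * ((a + 1 + (s₁ + 1) : ℕ) - (a + 1 : ℕ))
        = -(((a + s₁ + 2) * s₂ + (a + 1) * (s₁ + 1) : ℕ) : ℤ) := by
      push_cast; ring
    simp only [hf, hexp, zpow_neg, zpow_natCast, pow_succ, mul_assoc, hc]
    ring
  have hinner (z : ℝ) : jacksonIntegral q (q ^ (s₁ + 1) * z) (fun y ↦ f y z)
      = c * (qfact q a * qfact q s₁ / qfact q (a + s₁ + 1)) * q ^ ((s₁ + 1) * (a + 1))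
        * (z ^ (a + s₁ + 1) * ∏ m ∈ range s₂, (1 - z / (q ^ m * t))) := by
    rw [pow_succ, mul_assoc]
    simp only [hf', jacksonIntegral_const_mul, jacksonIntegral_qBeta hq0 hq1]
    ring
  have hqfact (n : ℕ) : qfact q n ≠ 0 := (qfact_pos hq0.le hq1 n).ne'
  calc _ = jacksonIntegral q t fun z ↦ jacksonIntegral q (q ^ (s₁ + 1) * z) fun y ↦ f y z := by
        simp only [jacksonIntegral, mul_comm t]
    _ = 1 := by
        simp only [hinner, jacksonIntegral_const_mul, jacksonIntegral_qBeta' hq0 hq1, hc,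
          show a + s₁ + 1 + s₂ + 1 = a + 1 + (s₁ + 1) + s₂ by ring]
        have := ht.ne'
        field_simp [hqfact]
        ring
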